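/- arXiv:1609.05454 — 3 statements merged into one kernel-verified Lean document; each statement's English description precedes it below -/
import Mathlib

section
/- A function f : [a,b] → ℝ is Henstock integrable (in the ε-δ sense: there exists A such that for every ε > 0 there is a gauge δ such that every δ-fine tagged partition P satisfies |S(f,P) − A| < ε) if and only if it is Sequential Henstock integrable (there exist A and a sequence of gauges δₙ such that for every choice of δₙ-fine tagged partitions Pₙ, the Riemann sums S(f,Pₙ) converge to A). -/
/-- A tagged partition of the compact interval `[a, b]`:
points `a = x 0 < x 1 < ⋯ < x n = b` with tags `t i ∈ [x i, x (i+1)]`. -/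
structure TaggedPartition (a b : ℝ) where
  n : ℕ
  x : ℕ → ℝ
  t : ℕ → ℝ
  n_pos : 0 < n
  x_zero : x 0 = a
  x_last : x n = b
  x_mono : ∀ i < n, x i < x (i + 1)
  tag_mem : ∀ i < n, x i ≤ t i ∧ t i ≤ x (i + 1)

/-- A gauge on `[a, b]` is a function positive on `[a, b]`. -/
def IsGauge (a b : ℝ) (δ : ℝ → ℝ) : Prop :=
  ∀ x ∈ Set.Icc a b, 0 < δ x

/-- A tagged partition is `δ`-fine if each subinterval has length `< δ(tag)`. -/
def IsFine (δ : ℝ → ℝ) {a b : ℝ} (P : TaggedPartition a b) : Prop :=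
  ∀ i < P.n, P.x (i + 1) - P.x i < δ (P.t i)

/-- The Riemann sum `S(f, P) = Σ f(tᵢ)(xᵢ − xᵢ₋₁)`. -/
noncomputable def riemannSum (f : ℝ → ℝ) {a b : ℝ} (P : TaggedPartition a b) : ℝ :=
  ∑ i ∈ Finset.range P.n, f (P.t i) * (P.x (i + 1) - P.x i)

/-- `f` is Henstock integrable on `[a, b]` with value `A` (ε-δ definition). -/
def HenstockIntegralTo (f : ℝ → ℝ) (a b A : ℝ) : Prop :=
  ∀ ε > 0, ∃ δ : ℝ → ℝ, IsGauge a b δ ∧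
    ∀ P : TaggedPartition a b, IsFine δ P → |riemannSum f P - A| < ε

/-! The gauges `δₙ` of the sequential definition are those of the ε-δ definition for
`ε = 1/(n+1)`. Conversely, if some `ε` admitted no good gauge, then each `δₙ` would admit a
`δₙ`-fine partition `Pₙ` with `|S(f, Pₙ) − A| ≥ ε`, and these Riemann sums could not
converge to `A`. -/

theorem HenstockIntegralTo.exists_gauge_seq_tendsto {f : ℝ → ℝ} {a b A : ℝ}
    (hA : HenstockIntegralTo f a b A) :
    ∃ δ : ℕ → ℝ → ℝ, (∀ n, IsGauge a b (δ n)) ∧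
      ∀ P : ℕ → TaggedPartition a b, (∀ n, IsFine (δ n) (P n)) →
        Filter.Tendsto (fun n => riemannSum f (P n)) Filter.atTop (nhds A) := by
  choose δ hgauge hclose using fun n : ℕ => hA (1 / (n + 1)) Nat.one_div_pos_of_nat
  refine ⟨δ, hgauge, fun P hfine => ?_⟩
  rw [tendsto_iff_dist_tendsto_zero]
  exact squeeze_zero (fun _ => dist_nonneg) (fun n => (hclose n (P n) (hfine n)).le)
    tendsto_one_div_add_atTop_nhds_zero_nat

theorem henstockIntegralTo_of_forall_tendsto {f : ℝ → ℝ} {a b A : ℝ} {δ : ℕ → ℝ → ℝ}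
    (hgauge : ∀ n, IsGauge a b (δ n))
    (htendsto : ∀ P : ℕ → TaggedPartition a b, (∀ n, IsFine (δ n) (P n)) →
      Filter.Tendsto (fun n => riemannSum f (P n)) Filter.atTop (nhds A)) :
    HenstockIntegralTo f a b A := by
  by_contra hnot
  simp only [HenstockIntegralTo, not_forall, not_exists, not_and, not_lt] at hnot
  obtain ⟨ε, hε, hbad⟩ := hnot
  choose P hfine hfar using fun n => hbad (δ n) (hgauge n)
  obtain ⟨N, hN⟩ := Metric.tendsto_atTop.mp (htendsto P hfine) ε hε
  exact (hfar N).not_gt (hN N le_rfl)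

theorem henstock_iff_sequentialHenstock_general (a b : ℝ) (f : ℝ → ℝ) :
    (∃ A : ℝ, HenstockIntegralTo f a b A) ↔
    (∃ A : ℝ, ∃ δ : ℕ → ℝ → ℝ, (∀ n, IsGauge a b (δ n)) ∧
      ∀ P : ℕ → TaggedPartition a b, (∀ n, IsFine (δ n) (P n)) →
        Filter.Tendsto (fun n => riemannSum f (P n)) Filter.atTop (nhds A)) :=
  ⟨fun ⟨A, hA⟩ => ⟨A, hA.exists_gauge_seq_tendsto⟩,
    fun ⟨A, _, hgauge, htendsto⟩ => ⟨A, henstockIntegralTo_of_forall_tendsto hgauge htendsto⟩⟩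

/-- The ε-δ Henstock integral is equivalent to the Sequential Henstock integral. -/
theorem henstock_iff_sequentialHenstock (a b : ℝ) (hab : a < b) (f : ℝ → ℝ) :
    (∃ A : ℝ, HenstockIntegralTo f a b A) ↔
    (∃ A : ℝ, ∃ δ : ℕ → ℝ → ℝ, (∀ n, IsGauge a b (δ n)) ∧
      ∀ P : ℕ → TaggedPartition a b, (∀ n, IsFine (δ n) (P n)) →
        Filter.Tendsto (fun n => riemannSum f (P n)) Filter.atTop (nhds A)) :=
  henstock_iff_sequentialHenstock_general a b f
end

section
/- Fundamental Theorem of Calculus, Part I, for the Henstock integral: if F : [a,b] → ℝ is differentiable at every point of [a,b] with F′(x) = f(x), then f is Henstock integrable on [a,b] and ∫ₐᵇ f = F(b) − F(a). -/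
/-- Fundamental Theorem of Calculus, Part I, for the Henstock integral:
every derivative is Henstock integrable, with integral `F(b) − F(a)`. -/
theorem henstock_ftc_part_one (a b : ℝ) (hab : a < b) (F f : ℝ → ℝ)
    (hF : ∀ x ∈ Set.Icc a b, HasDerivAt F (f x) x) :
    HenstockIntegralTo f a b (F b - F a) := by
  intro ε hε
  have hba : 0 < b - a := sub_pos.2 hab
  set ε' := ε / (2 * (b - a)) with hε'def
  have hε' : 0 < ε' := by positivity
  have key : ∀ t ∈ Set.Icc a b, ∃ d > 0, ∀ u, |u - t| < d →
      |F u - F t - f t * (u - t)| ≤ ε' * |u - t| := by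
    intro t ht
    have h := (hasDerivAt_iff_isLittleO.mp (hF t ht)).def hε'
    rw [Metric.eventually_nhds_iff] at h
    obtain ⟨d, hd, h⟩ := h
    refine ⟨d, hd, fun u hu => ?_⟩
    have := h (show dist u t < d by rwa [Real.dist_eq])
    simpa [Real.norm_eq_abs, smul_eq_mul, mul_comm] using this
  choose! d hd0 hd using key
  refine ⟨d, hd0, fun P hP => ?_⟩
  have hmono : ∀ i j, i ≤ j → j ≤ P.n → P.x i ≤ P.x j := by
    intro i j hij hjn
    induction j with
    | zero => simp_all
    | succ k ih =>
      rcases Nat.lt_or_ge i (k + 1) with h | h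
      · exact le_trans (ih (Nat.lt_succ_iff.mp h) (le_trans (Nat.le_succ k) hjn))
          (le_of_lt (P.x_mono k hjn))
      · have : i = k + 1 := le_antisymm hij h
        rw [this]
  have hmem : ∀ i < P.n, P.t i ∈ Set.Icc a b := by
    intro i hi
    obtain ⟨h1, h2⟩ := P.tag_mem i hi
    constructor
    · calc a = P.x 0 := P.x_zero.symm
        _ ≤ P.x i := hmono 0 i (Nat.zero_le _) (le_of_lt hi)
        _ ≤ P.t i := h1
    · calc P.t i ≤ P.x (i + 1) := h2
        _ ≤ P.x P.n := hmono (i + 1) P.n hi (le_refl _)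
        _ = b := P.x_last
  have hterm : ∀ i ∈ Finset.range P.n,
      |f (P.t i) * (P.x (i + 1) - P.x i) - (F (P.x (i + 1)) - F (P.x i))| ≤
        ε' * (P.x (i + 1) - P.x i) := by
    intro i hi
    rw [Finset.mem_range] at hi
    obtain ⟨h1, h2⟩ := P.tag_mem i hi
    have hfine := hP i hi
    have ht := hmem i hi
    set u := P.x i with hu'
    set v := P.x (i + 1) with hv'
    set s := P.t i with hs'
    have hv : |v - s| < d s := by rw [abs_of_nonneg (by linarith)]; linarith
    have hu : |u - s| < d s := by rw [abs_of_nonpos (by linarith)]; linarith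
    have e1 := hd s ht v hv
    have e2 := hd s ht u hu
    rw [show |v - s| = v - s from abs_of_nonneg (by linarith)] at e1
    rw [show |u - s| = -(u - s) from abs_of_nonpos (by linarith)] at e2
    have heq : f s * (v - u) - (F v - F u) =
        -(F v - F s - f s * (v - s)) + (F u - F s - f s * (u - s)) := by ring
    rw [heq]
    calc |-(F v - F s - f s * (v - s)) + (F u - F s - f s * (u - s))|
        ≤ |-(F v - F s - f s * (v - s))| + |F u - F s - f s * (u - s)| := abs_add_le _ _
      _ = |F v - F s - f s * (v - s)| + |F u - F s - f s * (u - s)| := by rw [abs_neg]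
      _ ≤ ε' * (v - s) + ε' * -(u - s) := add_le_add e1 e2
      _ = ε' * (v - u) := by ring
  have hsum : F b - F a = ∑ i ∈ Finset.range P.n, (F (P.x (i + 1)) - F (P.x i)) := by
    rw [Finset.sum_range_sub (fun i => F (P.x i)), P.x_zero, P.x_last]
  rw [riemannSum, hsum, ← Finset.sum_sub_distrib]
  calc |∑ i ∈ Finset.range P.n,
        (f (P.t i) * (P.x (i + 1) - P.x i) - (F (P.x (i + 1)) - F (P.x i)))|
      ≤ ∑ i ∈ Finset.range P.n,
        |f (P.t i) * (P.x (i + 1) - P.x i) - (F (P.x (i + 1)) - F (P.x i))| :=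
        Finset.abs_sum_le_sum_abs _ _
    _ ≤ ∑ i ∈ Finset.range P.n, ε' * (P.x (i + 1) - P.x i) := Finset.sum_le_sum hterm
    _ = ε' * (b - a) := by
        rw [← Finset.mul_sum, Finset.sum_range_sub (fun i => P.x i), P.x_zero, P.x_last]
    _ = ε / 2 := by rw [hε'def]; field_simp
    _ < ε := by linarith
end

section
/- Monotone Convergence Theorem for the Henstock integral: let (f_k) be a monotone (pointwise non-decreasing) sequence of Henstock integrable functions on [a,b] converging pointwise to f : [a,b] → ℝ. If lim_{k→∞} ∫ₐᵇ f_k exists (in ℝ), then f is Henstock integrable on [a,b] and ∫ₐᵇ f = lim_{k→∞} ∫ₐᵇ f_k. -/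
namespace TaggedPartition

variable {a b c : ℝ}

lemma x_le (P : TaggedPartition a b) : ∀ {i j : ℕ}, i ≤ j → j ≤ P.n → P.x i ≤ P.x j := by
  intro i j hij hjn
  induction j with
  | zero => simp_all
  | succ j ih =>
    rcases Nat.eq_or_lt_of_le hij with rfl | h
    · exact le_rfl
    · exact le_trans (ih (Nat.lt_succ_iff.1 h) (by omega)) (le_of_lt (P.x_mono j (by omega)))

lemma x_lt (P : TaggedPartition a b) {i j : ℕ} (hij : i < j) (hjn : j ≤ P.n) :
    P.x i < P.x j := by
  obtain ⟨j, rfl⟩ : ∃ j', j = j' + 1 := ⟨j - 1, by omega⟩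
  exact lt_of_le_of_lt (P.x_le (by omega) (by omega)) (P.x_mono j (by omega))

lemma x_mem (P : TaggedPartition a b) {i : ℕ} (hi : i ≤ P.n) : P.x i ∈ Set.Icc a b := by
  constructor
  · have h := P.x_le (Nat.zero_le i) hi
    rwa [P.x_zero] at h
  · have h := P.x_le hi le_rfl
    rwa [P.x_last] at h

lemma t_mem (P : TaggedPartition a b) {i : ℕ} (hi : i < P.n) : P.t i ∈ Set.Icc a b :=
  ⟨le_trans (P.x_mem hi.le).1 (P.tag_mem i hi).1,
   le_trans (P.tag_mem i hi).2 (P.x_mem hi).2⟩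

lemma sum_lengths (P : TaggedPartition a b) :
    ∑ i ∈ Finset.range P.n, (P.x (i + 1) - P.x i) = b - a := by
  rw [Finset.sum_range_sub, P.x_zero, P.x_last]

/-- One-interval tagged partition. -/
def single (c d t : ℝ) (hcd : c < d) (h1 : c ≤ t) (h2 : t ≤ d) : TaggedPartition c d where
  n := 1
  x := fun i => if i = 0 then c else d
  t := fun _ => t
  n_pos := one_pos
  x_zero := by simp
  x_last := by simp
  x_mono := by intro i hi; interval_cases i; simpa using hcd
  tag_mem := by intro i hi; interval_cases i; simpa using ⟨h1, h2⟩

lemma riemannSum_single (f : ℝ → ℝ) {c d t : ℝ} (hcd : c < d) (h1 : c ≤ t) (h2 : t ≤ d) :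
    riemannSum f (single c d t hcd h1 h2) = f t * (d - c) := by
  simp [riemannSum, single]

lemma isFine_single {δ : ℝ → ℝ} {c d t : ℝ} (hcd : c < d) (h1 : c ≤ t) (h2 : t ≤ d)
    (h : d - c < δ t) : IsFine δ (single c d t hcd h1 h2) := by
  intro i hi
  rw [show (single c d t hcd h1 h2).n = 1 from rfl] at hi
  have h0 : i = 0 := by omega
  subst h0
  simpa [single] using h

/-- Re-type a partition along equalities of the endpoints. -/
def relabel {a' b' : ℝ} (P : TaggedPartition a b) (ha : a = a') (hb : b = b') :
    TaggedPartition a' b' :=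
  { P with x_zero := ha ▸ P.x_zero, x_last := hb ▸ P.x_last }

lemma riemannSum_relabel (f : ℝ → ℝ) {a' b' : ℝ} (P : TaggedPartition a b)
    (ha : a = a') (hb : b = b') : riemannSum f (P.relabel ha hb) = riemannSum f P := rfl

lemma isFine_relabel {δ : ℝ → ℝ} {a' b' : ℝ} (P : TaggedPartition a b)
    (ha : a = a') (hb : b = b') (h : IsFine δ P) : IsFine δ (P.relabel ha hb) := h

/-- Division points of a concatenation. -/
def concatX (P : TaggedPartition a b) (Q : TaggedPartition b c) : ℕ → ℝ :=
  fun i => if i ≤ P.n then P.x i else Q.x (i - P.n)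

/-- Tags of a concatenation. -/
def concatT (P : TaggedPartition a b) (Q : TaggedPartition b c) : ℕ → ℝ :=
  fun i => if i < P.n then P.t i else Q.t (i - P.n)

lemma concatX_low (P : TaggedPartition a b) (Q : TaggedPartition b c) {i : ℕ}
    (h : i ≤ P.n) : concatX P Q i = P.x i := if_pos h

lemma concatX_high (P : TaggedPartition a b) (Q : TaggedPartition b c) {i : ℕ}
    (h : P.n ≤ i) : concatX P Q i = Q.x (i - P.n) := by
  rcases eq_or_lt_of_le h with h' | h'
  · rw [concatX, if_pos h'.ge, ← h', Nat.sub_self, Q.x_zero, P.x_last]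
  · exact if_neg (by omega)

lemma concatT_low (P : TaggedPartition a b) (Q : TaggedPartition b c) {i : ℕ}
    (h : i < P.n) : concatT P Q i = P.t i := if_pos h

lemma concatT_high (P : TaggedPartition a b) (Q : TaggedPartition b c) {i : ℕ}
    (h : P.n ≤ i) : concatT P Q i = Q.t (i - P.n) := if_neg (by omega)

/-- Concatenation of tagged partitions. -/
def concat (P : TaggedPartition a b) (Q : TaggedPartition b c) : TaggedPartition a c where
  n := P.n + Q.n
  x := concatX P Q
  t := concatT P Q
  n_pos := by have := P.n_pos; omega
  x_zero := by rw [concatX_low P Q (Nat.zero_le _), P.x_zero]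
  x_last := by rw [concatX_high P Q (by omega), Nat.add_sub_cancel_left, Q.x_last]
  x_mono := by
    intro i hi
    rcases lt_or_ge i P.n with h | h
    · rw [concatX_low P Q h.le, concatX_low P Q (by omega : i + 1 ≤ P.n)]
      exact P.x_mono i h
    · rw [concatX_high P Q h, concatX_high P Q (by omega),
        show i + 1 - P.n = (i - P.n) + 1 by omega]
      exact Q.x_mono (i - P.n) (by omega)
  tag_mem := by
    intro i hi
    rcases lt_or_ge i P.n with h | h
    · rw [concatT_low P Q h, concatX_low P Q h.le, concatX_low P Q (by omega : i + 1 ≤ P.n)]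
      exact P.tag_mem i h
    · rw [concatT_high P Q h, concatX_high P Q h, concatX_high P Q (by omega),
        show i + 1 - P.n = (i - P.n) + 1 by omega]
      exact Q.tag_mem (i - P.n) (by omega)

lemma concat_n (P : TaggedPartition a b) (Q : TaggedPartition b c) :
    (P.concat Q).n = P.n + Q.n := rfl

lemma isFine_concat {δ : ℝ → ℝ} (P : TaggedPartition a b) (Q : TaggedPartition b c)
    (hP : IsFine δ P) (hQ : IsFine δ Q) : IsFine δ (P.concat Q) := by
  intro i hi
  rw [concat_n] at hi
  show concatX P Q (i + 1) - concatX P Q i < δ (concatT P Q i)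
  rcases lt_or_ge i P.n with h | h
  · rw [concatT_low P Q h, concatX_low P Q h.le, concatX_low P Q (by omega : i + 1 ≤ P.n)]
    exact hP i h
  · rw [concatT_high P Q h, concatX_high P Q h, concatX_high P Q (by omega),
      show i + 1 - P.n = (i - P.n) + 1 by omega]
    exact hQ (i - P.n) (by omega)

lemma riemannSum_concat (f : ℝ → ℝ) (P : TaggedPartition a b) (Q : TaggedPartition b c) :
    riemannSum f (P.concat Q) = riemannSum f P + riemannSum f Q := by
  show ∑ i ∈ Finset.range (P.n + Q.n), f (concatT P Q i) * (concatX P Q (i + 1) - concatX P Q i) = _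
  rw [Finset.sum_range_add]
  congr 1
  · exact Finset.sum_congr rfl fun i hi => by
      rw [Finset.mem_range] at hi
      rw [concatT_low P Q hi, concatX_low P Q hi.le, concatX_low P Q (by omega : i + 1 ≤ P.n)]
  · exact Finset.sum_congr rfl fun i hi => by
      rw [Finset.mem_range] at hi
      rw [concatT_high P Q (by omega), concatX_high (i := P.n + i + 1) P Q (by omega),
        concatX_high (i := P.n + i) P Q (by omega),
        show P.n + i - P.n = i by omega, show P.n + i + 1 - P.n = i + 1 by omega]

end TaggedPartition

open TaggedPartition

lemma isGauge_min {a b : ℝ} {δ1 δ2 : ℝ → ℝ} (h1 : IsGauge a b δ1) (h2 : IsGauge a b δ2) :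
    IsGauge a b (fun x => min (δ1 x) (δ2 x)) :=
  fun x hx => lt_min (h1 x hx) (h2 x hx)

lemma isFine_min_left {a b : ℝ} {δ1 δ2 : ℝ → ℝ} {P : TaggedPartition a b}
    (h : IsFine (fun x => min (δ1 x) (δ2 x)) P) : IsFine δ1 P :=
  fun i hi => lt_of_lt_of_le (h i hi) (min_le_left _ _)

lemma isFine_min_right {a b : ℝ} {δ1 δ2 : ℝ → ℝ} {P : TaggedPartition a b}
    (h : IsFine (fun x => min (δ1 x) (δ2 x)) P) : IsFine δ2 P :=
  fun i hi => lt_of_lt_of_le (h i hi) (min_le_right _ _)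

lemma isGauge_subset {a b c d : ℝ} {δ : ℝ → ℝ} (hac : a ≤ c) (hdb : d ≤ b)
    (h : IsGauge a b δ) : IsGauge c d δ :=
  fun x hx => h x ⟨le_trans hac hx.1, le_trans hx.2 hdb⟩

/-- Cousin's lemma: every gauge admits a fine tagged partition. -/
theorem cousin {a b : ℝ} (hab : a < b) {δ : ℝ → ℝ} (hδ : IsGauge a b δ) :
    ∃ P : TaggedPartition a b, IsFine δ P := by
  set S : Set ℝ := {c | a < c ∧ c ≤ b ∧ ∃ P : TaggedPartition a c, IsFine δ P} with hS
  have hδa : 0 < δ a := hδ a ⟨le_rfl, hab.le⟩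
  have hc0 : min b (a + δ a / 2) ∈ S := by
    have h1 : a < min b (a + δ a / 2) := lt_min hab (by linarith)
    refine ⟨h1, min_le_left _ _, ⟨single a _ a h1 le_rfl h1.le, ?_⟩⟩
    exact isFine_single h1 le_rfl h1.le (by
      have := min_le_right b (a + δ a / 2); linarith)
  have hne : S.Nonempty := ⟨_, hc0⟩
  have hbdd : BddAbove S := ⟨b, fun c hc => hc.2.1⟩
  set s := sSup S with hs
  have hs_le : s ≤ b := csSup_le hne (fun c hc => hc.2.1)
  have ha_lt_s : a < s := lt_of_lt_of_le hc0.1 (le_csSup hbdd hc0)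
  have hδs : 0 < δ s := hδ s ⟨ha_lt_s.le, hs_le⟩
  obtain ⟨c, hcS, hcs⟩ : ∃ c ∈ S, s - δ s / 2 < c :=
    exists_lt_of_lt_csSup hne (by linarith)
  have hcle : c ≤ s := le_csSup hbdd hcS
  set u := min b (s + δ s / 2) with hu
  have hsu : s ≤ u := le_min hs_le (by linarith)
  have huS : u ∈ S := by
    rcases eq_or_lt_of_le (le_trans hcle hsu) with h | h
    · exact h ▸ hcS
    · obtain ⟨hac, hcb, P, hP⟩ := hcS
      refine ⟨lt_trans hac h, min_le_left _ _,
        ⟨P.concat (single c u s h hcle hsu), ?_⟩⟩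
      refine isFine_concat P _ hP (isFine_single h hcle hsu ?_)
      have := min_le_right b (s + δ s / 2)
      linarith
  have hus : u ≤ s := le_csSup hbdd huS
  have hsb : s = b := by
    by_contra h
    have hsb' : s < b := lt_of_le_of_ne hs_le h
    have : s < u := lt_min hsb' (by linarith)
    linarith
  obtain ⟨-, -, P, hP⟩ := huS
  have hδb : 0 < δ b := hsb ▸ hδs
  have hub : u = b := by rw [hu, hsb]; exact min_eq_left (by linarith)
  exact ⟨P.relabel rfl hub, isFine_relabel P rfl hub hP⟩

lemma eq_of_forall_abs_lt {x y : ℝ} (h : ∀ ε > 0, |x - y| < ε) : x = y := by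
  by_contra hne
  have h0 : 0 < |x - y| := abs_pos.2 (sub_ne_zero.2 hne)
  linarith [h (|x - y| / 2) (by linarith)]

lemma henstock_unique {g : ℝ → ℝ} {c d B1 B2 : ℝ} (hcd : c < d)
    (h1 : HenstockIntegralTo g c d B1) (h2 : HenstockIntegralTo g c d B2) : B1 = B2 := by
  apply eq_of_forall_abs_lt
  intro ε hε
  obtain ⟨δ1, hδ1, hh1⟩ := h1 (ε / 2) (by linarith)
  obtain ⟨δ2, hδ2, hh2⟩ := h2 (ε / 2) (by linarith)
  obtain ⟨P, hP⟩ := cousin hcd (isGauge_min hδ1 hδ2)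
  have e1 := hh1 P (isFine_min_left hP)
  have e2 := hh2 P (isFine_min_right hP)
  have : |B1 - B2| ≤ |riemannSum g P - B2| + |riemannSum g P - B1| := by
    have := abs_sub (riemannSum g P - B2) (riemannSum g P - B1)
    calc |B1 - B2| = |(riemannSum g P - B2) - (riemannSum g P - B1)| := by ring_nf
    _ ≤ _ := this
  linarith

lemma henstock_le {g h : ℝ → ℝ} {c d G H : ℝ} (hcd : c < d)
    (hle : ∀ x ∈ Set.Icc c d, g x ≤ h x)
    (hg : HenstockIntegralTo g c d G) (hh : HenstockIntegralTo h c d H) : G ≤ H := by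
  by_contra hGH
  push_neg at hGH
  set ε := (G - H) / 2 with hε
  have hε0 : 0 < ε := by rw [hε]; linarith
  obtain ⟨δ1, hδ1, hh1⟩ := hg ε hε0
  obtain ⟨δ2, hδ2, hh2⟩ := hh ε hε0
  obtain ⟨P, hP⟩ := cousin hcd (isGauge_min hδ1 hδ2)
  have e1 := hh1 P (isFine_min_left hP)
  have e2 := hh2 P (isFine_min_right hP)
  have hSS : riemannSum g P ≤ riemannSum h P := by
    apply Finset.sum_le_sum
    intro i hi
    rw [Finset.mem_range] at hi
    have ht := P.t_mem hi
    have hx := P.x_mono i hi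
    exact mul_le_mul_of_nonneg_right (hle _ ht) (by linarith)
  rw [abs_lt] at e1 e2
  have := e1.1
  have := e2.2
  simp only [hε] at *
  linarith

/-- All fine Riemann sums are within `ε` of `C`. -/
def Approx (g : ℝ → ℝ) (a b : ℝ) (δ : ℝ → ℝ) (C ε : ℝ) : Prop :=
  ∀ P : TaggedPartition a b, IsFine δ P → |riemannSum g P - C| < ε

lemma approx_cut_left {g : ℝ → ℝ} {a b c C ε : ℝ} {δ : ℝ → ℝ} (hac : a < c) (hcb : c < b)
    (hδ : IsGauge a b δ) (h : Approx g a b δ C ε) : ∃ C', Approx g c b δ C' ε := by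
  obtain ⟨Q, hQ⟩ := cousin hac (isGauge_subset le_rfl hcb.le hδ)
  refine ⟨C - riemannSum g Q, fun P hP => ?_⟩
  have hcc := h (Q.concat P) (isFine_concat Q P hQ hP)
  rw [riemannSum_concat] at hcc
  have : riemannSum g P - (C - riemannSum g Q)
      = riemannSum g Q + riemannSum g P - C := by ring
  rw [this]
  exact hcc

lemma approx_cut_right {g : ℝ → ℝ} {a b c C ε : ℝ} {δ : ℝ → ℝ} (hac : a < c) (hcb : c < b)
    (hδ : IsGauge a b δ) (h : Approx g a b δ C ε) : ∃ C', Approx g a c δ C' ε := by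
  obtain ⟨Q, hQ⟩ := cousin hcb (isGauge_subset hac.le le_rfl hδ)
  refine ⟨C - riemannSum g Q, fun P hP => ?_⟩
  have hcc := h (P.concat Q) (isFine_concat P Q hP hQ)
  rw [riemannSum_concat] at hcc
  have : riemannSum g P - (C - riemannSum g Q)
      = riemannSum g P + riemannSum g Q - C := by ring
  rw [this]
  exact hcc

lemma approx_sub {g : ℝ → ℝ} {a b c d C ε : ℝ} {δ : ℝ → ℝ}
    (hac : a ≤ c) (hcd : c < d) (hdb : d ≤ b)
    (hδ : IsGauge a b δ) (h : Approx g a b δ C ε) : ∃ C', Approx g c d δ C' ε := by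
  have h1 : ∃ C1, Approx g c b δ C1 ε := by
    rcases eq_or_lt_of_le hac with rfl | h'
    · exact ⟨C, h⟩
    · exact approx_cut_left h' (lt_of_lt_of_le hcd hdb) hδ h
  obtain ⟨C1, h1⟩ := h1
  have hδ' : IsGauge c b δ := isGauge_subset hac le_rfl hδ
  rcases eq_or_lt_of_le hdb with rfl | h'
  · exact ⟨C1, h1⟩
  · exact approx_cut_right hcd h' hδ' h1

/-- A Henstock integrable function is integrable on subintervals. -/
lemma henstock_sub {g : ℝ → ℝ} {a b c d A : ℝ} (hg : HenstockIntegralTo g a b A)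
    (hac : a ≤ c) (hcd : c < d) (hdb : d ≤ b) : ∃ B, HenstockIntegralTo g c d B := by
  have key : ∀ n : ℕ, ∃ p : (ℝ → ℝ) × ℝ, IsGauge c d p.1 ∧
      Approx g c d p.1 p.2 (1 / (n + 1)) := by
    intro n
    obtain ⟨δ, hδ, hap⟩ := hg (1 / (n + 1)) (by positivity)
    obtain ⟨C, hC⟩ := approx_sub hac hcd hdb hδ hap
    exact ⟨(δ, C), isGauge_subset hac hdb hδ, hC⟩
  choose p hpG hpA using key
  set Cs : ℕ → ℝ := fun n => (p n).2 with hCs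
  have hdist : ∀ m n : ℕ, |Cs m - Cs n| ≤ 1 / (m + 1) + 1 / (n + 1) := by
    intro m n
    obtain ⟨P, hP⟩ := cousin hcd (isGauge_min (hpG m) (hpG n))
    have e1 := hpA m P (isFine_min_left hP)
    have e2 := hpA n P (isFine_min_right hP)
    have h3 : |Cs m - Cs n| ≤ |riemannSum g P - Cs n| + |riemannSum g P - Cs m| := by
      have := abs_sub (riemannSum g P - Cs n) (riemannSum g P - Cs m)
      calc |Cs m - Cs n| = |(riemannSum g P - Cs n) - (riemannSum g P - Cs m)| := by ring_nf
      _ ≤ _ := this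
    linarith
  have hcauchy : CauchySeq Cs := by
    rw [Metric.cauchySeq_iff]
    intro ε hε
    obtain ⟨N, hN⟩ := exists_nat_one_div_lt (show (0:ℝ) < ε / 2 by linarith)
    refine ⟨N, fun m hm n hn => ?_⟩
    have h1 : (1:ℝ) / (m + 1) ≤ 1 / (N + 1) := by
      apply one_div_le_one_div_of_le (by positivity)
      exact_mod_cast by omega
    have h2 : (1:ℝ) / (n + 1) ≤ 1 / (N + 1) := by
      apply one_div_le_one_div_of_le (by positivity)
      exact_mod_cast by omega
    rw [Real.dist_eq]
    calc |Cs m - Cs n| ≤ 1 / (m + 1) + 1 / (n + 1) := hdist m n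
    _ ≤ 1 / (N + 1) + 1 / (N + 1) := by linarith
    _ < ε / 2 + ε / 2 := by linarith
    _ = ε := by ring
  obtain ⟨B, hB⟩ := cauchySeq_tendsto_of_complete hcauchy
  have hCB : ∀ n : ℕ, |Cs n - B| ≤ 1 / (n + 1) := by
    intro n
    have h1 : Filter.Tendsto (fun m => |Cs n - Cs m|) Filter.atTop (nhds |Cs n - B|) :=
      ((tendsto_const_nhds.sub hB).abs)
    have h2 : Filter.Tendsto (fun m : ℕ => 1 / ((n:ℝ) + 1) + 1 / ((m:ℝ) + 1))
        Filter.atTop (nhds (1 / ((n:ℝ) + 1) + 0)) :=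
      tendsto_const_nhds.add tendsto_one_div_add_atTop_nhds_zero_nat
    rw [add_zero] at h2
    exact le_of_tendsto_of_tendsto' h1 h2 (fun m => by
      have := hdist n m; push_cast at this ⊢; linarith)
  refine ⟨B, fun ε hε => ?_⟩
  obtain ⟨n, hn⟩ := exists_nat_one_div_lt (show (0:ℝ) < ε / 2 by linarith)
  refine ⟨(p n).1, hpG n, fun P hP => ?_⟩
  have h1 := hpA n P hP
  have h2 := hCB n
  have h3 := abs_sub_le (riemannSum g P) (Cs n) B
  push_cast at hn h1 h2 ⊢
  linarith

-- The value of the Henstock integral, if it exists (otherwise `0`).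
open Classical in
noncomputable def hval (g : ℝ → ℝ) (c d : ℝ) : ℝ :=
  if h : ∃ B, HenstockIntegralTo g c d B then h.choose else 0

lemma hval_spec {g : ℝ → ℝ} {c d : ℝ} (h : ∃ B, HenstockIntegralTo g c d B) :
    HenstockIntegralTo g c d (hval g c d) := by
  classical
  rw [hval, dif_pos h]
  exact h.choose_spec

/-- Concatenating a family of partitions of the subintervals of `P`. -/
lemma concat_family {a b : ℝ} (P : TaggedPartition a b) (g δ : ℝ → ℝ) (s : ℕ → ℝ)
    (R : ∀ i, i < P.n → TaggedPartition (P.x i) (P.x (i + 1)))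
    (hfine : ∀ i (hi : i < P.n), IsFine δ (R i hi))
    (hs : ∀ i (hi : i < P.n), riemannSum g (R i hi) = s i) :
    ∃ W : TaggedPartition a b, IsFine δ W ∧
      riemannSum g W = ∑ i ∈ Finset.range P.n, s i := by
  have main : ∀ m, 0 < m → ∀ hm : m ≤ P.n, ∃ W : TaggedPartition a (P.x m),
      IsFine δ W ∧ riemannSum g W = ∑ i ∈ Finset.range m, s i := by
    intro m
    induction m with
    | zero => intro h; exact absurd h (lt_irrefl 0)
    | succ m ih =>
      intro _ hm
      rcases Nat.eq_zero_or_pos m with rfl | hm0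
      · refine ⟨(R 0 (by omega)).relabel P.x_zero rfl, isFine_relabel _ _ _ (hfine 0 _), ?_⟩
        rw [riemannSum_relabel, hs 0 (by omega), Finset.sum_range_one]
      · obtain ⟨W, hWf, hWs⟩ := ih hm0 (by omega)
        refine ⟨W.concat (R m (by omega)), isFine_concat W _ hWf (hfine m (by omega)), ?_⟩
        rw [riemannSum_concat, hWs, hs m (by omega), Finset.sum_range_succ]
  obtain ⟨W, h1, h2⟩ := main P.n P.n_pos le_rfl
  exact ⟨W.relabel rfl P.x_last, h1, h2⟩

/-- Additivity: the integral values over the subintervals of a partition sum to `A`. -/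
lemma hval_sum {a b A : ℝ} {g : ℝ → ℝ} (hg : HenstockIntegralTo g a b A)
    (P : TaggedPartition a b) :
    ∑ i ∈ Finset.range P.n, hval g (P.x i) (P.x (i + 1)) = A := by
  have hsub : ∀ i, i < P.n →
      HenstockIntegralTo g (P.x i) (P.x (i + 1)) (hval g (P.x i) (P.x (i + 1))) :=
    fun i hi => hval_spec (henstock_sub hg (P.x_mem hi.le).1 (P.x_mono i hi) (P.x_mem hi).2)
  apply eq_of_forall_abs_lt
  intro ε hε
  obtain ⟨δ, hδ, hA⟩ := hg (ε / 2) (by linarith)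
  have hQ : ∀ i (hi : i < P.n), ∃ Q : TaggedPartition (P.x i) (P.x (i + 1)),
      IsFine δ Q ∧ |riemannSum g Q - hval g (P.x i) (P.x (i + 1))| < ε / (2 * P.n) := by
    intro i hi
    obtain ⟨δ', hδ', h'⟩ := hsub i hi (ε / (2 * P.n))
      (by have := P.n_pos; positivity)
    obtain ⟨Q, hQf⟩ := cousin (P.x_mono i hi)
      (isGauge_min (isGauge_subset (P.x_mem hi.le).1 (P.x_mem hi).2 hδ) hδ')
    exact ⟨Q, isFine_min_left hQf, h' Q (isFine_min_right hQf)⟩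
  choose Q hQf hQe using hQ
  classical
  set s : ℕ → ℝ := fun i => if hi : i < P.n then riemannSum g (Q i hi) else 0 with hsdef
  obtain ⟨W, hWf, hWs⟩ := concat_family P g δ s Q hQf
    (fun i hi => by rw [hsdef]; simp only [dif_pos hi])
  have h1 := hA W hWf
  rw [hWs] at h1
  have h2 : |∑ i ∈ Finset.range P.n, s i
      - ∑ i ∈ Finset.range P.n, hval g (P.x i) (P.x (i + 1))| < ε / 2 := by
    rw [← Finset.sum_sub_distrib]
    calc |∑ i ∈ Finset.range P.n, (s i - hval g (P.x i) (P.x (i + 1)))|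
        ≤ ∑ i ∈ Finset.range P.n, |s i - hval g (P.x i) (P.x (i + 1))| :=
          Finset.abs_sum_le_sum_abs _ _
      _ < ∑ _i ∈ Finset.range P.n, (ε / (2 * P.n)) := by
          apply Finset.sum_lt_sum_of_nonempty
          · exact ⟨0, Finset.mem_range.2 P.n_pos⟩
          · intro i hi
            rw [Finset.mem_range] at hi
            have := hQe i hi
            rw [hsdef]
            simpa only [dif_pos hi] using this
      _ = ε / 2 := by
          rw [Finset.sum_const, Finset.card_range, nsmul_eq_mul]
          have hn : (P.n : ℝ) ≠ 0 := Nat.cast_ne_zero.2 P.n_pos.ne'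
          field_simp
  calc |∑ i ∈ Finset.range P.n, hval g (P.x i) (P.x (i + 1)) - A|
      ≤ |∑ i ∈ Finset.range P.n, hval g (P.x i) (P.x (i + 1))
          - ∑ i ∈ Finset.range P.n, s i| + |∑ i ∈ Finset.range P.n, s i - A| :=
        abs_sub_le _ _ _
    _ < ε := by rw [abs_sub_comm] at h2; linarith

/-- Saks–Henstock lemma (one-sided, partial-partition form). -/
lemma saks_henstock {a b A η : ℝ} {g : ℝ → ℝ} (hg : HenstockIntegralTo g a b A)
    (P : TaggedPartition a b) {δ : ℝ → ℝ} (hδ : IsGauge a b δ)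
    (happ : Approx g a b δ A η)
    (T : Finset ℕ) (hT : T ⊆ Finset.range P.n)
    (hfine : ∀ i ∈ T, P.x (i + 1) - P.x i < δ (P.t i)) :
    |∑ i ∈ T, (g (P.t i) * (P.x (i + 1) - P.x i) - hval g (P.x i) (P.x (i + 1)))| ≤ η := by
  classical
  have hsub : ∀ i, i < P.n →
      HenstockIntegralTo g (P.x i) (P.x (i + 1)) (hval g (P.x i) (P.x (i + 1))) :=
    fun i hi => hval_spec (henstock_sub hg (P.x_mem hi.le).1 (P.x_mono i hi) (P.x_mem hi).2)
  have key : ∀ ε > 0,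
      |∑ i ∈ T, (g (P.t i) * (P.x (i + 1) - P.x i) - hval g (P.x i) (P.x (i + 1)))|
        < η + ε := by
    intro ε hε
    -- fine partitions of the complementary subintervals
    have hQ : ∀ i (hi : i < P.n), ∃ Q : TaggedPartition (P.x i) (P.x (i + 1)),
        IsFine δ Q ∧ |riemannSum g Q - hval g (P.x i) (P.x (i + 1))| < ε / P.n := by
      intro i hi
      obtain ⟨δ', hδ', h'⟩ := hsub i hi (ε / P.n) (by have := P.n_pos; positivity)
      obtain ⟨Q, hQf⟩ := cousin (P.x_mono i hi)
        (isGauge_min (isGauge_subset (P.x_mem hi.le).1 (P.x_mem hi).2 hδ) hδ')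
      exact ⟨Q, isFine_min_left hQf, h' Q (isFine_min_right hQf)⟩
    choose Q hQf hQe using hQ
    -- the combined partition
    set R : ∀ i, i < P.n → TaggedPartition (P.x i) (P.x (i + 1)) := fun i hi =>
      if i ∈ T then TaggedPartition.single _ _ (P.t i) (P.x_mono i hi)
        (P.tag_mem i hi).1 (P.tag_mem i hi).2 else Q i hi with hRdef
    set s : ℕ → ℝ := fun i =>
      if hi : i < P.n then
        (if i ∈ T then g (P.t i) * (P.x (i + 1) - P.x i) else riemannSum g (Q i hi))
      else 0 with hsdef
    have hRfine : ∀ i (hi : i < P.n), IsFine δ (R i hi) := by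
      intro i hi
      rw [hRdef]
      by_cases hiT : i ∈ T
      · simp only [if_pos hiT]
        exact TaggedPartition.isFine_single _ _ _ (hfine i hiT)
      · simp only [if_neg hiT]
        exact hQf i hi
    have hRs : ∀ i (hi : i < P.n), riemannSum g (R i hi) = s i := by
      intro i hi
      rw [hRdef, hsdef]
      simp only [dif_pos hi]
      by_cases hiT : i ∈ T
      · simp only [if_pos hiT]
        exact TaggedPartition.riemannSum_single g _ _ _
      · simp only [if_neg hiT]
    obtain ⟨W, hWf, hWs⟩ := concat_family P g δ s R hRfine hRs
    have h1 := happ W hWf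
    rw [hWs] at h1
    -- split the sum
    have hsplit : ∑ i ∈ Finset.range P.n, (s i - hval g (P.x i) (P.x (i + 1)))
        = ∑ i ∈ Finset.range P.n \ T, (s i - hval g (P.x i) (P.x (i + 1)))
          + ∑ i ∈ T, (s i - hval g (P.x i) (P.x (i + 1))) :=
      (Finset.sum_sdiff hT).symm
    have hsum_eq : ∑ i ∈ Finset.range P.n, (s i - hval g (P.x i) (P.x (i + 1)))
        = ∑ i ∈ Finset.range P.n, s i - A := by
      rw [Finset.sum_sub_distrib, hval_sum hg P]
    have hTeq : ∑ i ∈ T, (s i - hval g (P.x i) (P.x (i + 1)))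
        = ∑ i ∈ T, (g (P.t i) * (P.x (i + 1) - P.x i) - hval g (P.x i) (P.x (i + 1))) := by
      apply Finset.sum_congr rfl
      intro i hiT
      have hi : i < P.n := Finset.mem_range.1 (hT hiT)
      rw [hsdef]
      simp only [dif_pos hi, if_pos hiT]
    have hcomp : |∑ i ∈ Finset.range P.n \ T, (s i - hval g (P.x i) (P.x (i + 1)))| ≤ ε := by
      calc |∑ i ∈ Finset.range P.n \ T, (s i - hval g (P.x i) (P.x (i + 1)))|
          ≤ ∑ i ∈ Finset.range P.n \ T, |s i - hval g (P.x i) (P.x (i + 1))| :=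
            Finset.abs_sum_le_sum_abs _ _
        _ ≤ ∑ _i ∈ Finset.range P.n \ T, (ε / P.n) := by
            apply Finset.sum_le_sum
            intro i hi
            rw [Finset.mem_sdiff, Finset.mem_range] at hi
            have := hQe i hi.1
            rw [hsdef]
            simp only [dif_pos hi.1, if_neg hi.2]
            exact this.le
        _ ≤ ∑ _i ∈ Finset.range P.n, (ε / P.n) := by
            apply Finset.sum_le_sum_of_subset_of_nonneg (Finset.sdiff_subset)
            intro i _ _
            have := P.n_pos; positivity
        _ = ε := by
            rw [Finset.sum_const, Finset.card_range, nsmul_eq_mul]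
            have hn : (P.n : ℝ) ≠ 0 := Nat.cast_ne_zero.2 P.n_pos.ne'
            field_simp
    rw [← hTeq]
    have heq : ∑ i ∈ T, (s i - hval g (P.x i) (P.x (i + 1)))
        = (∑ i ∈ Finset.range P.n, s i - A)
          - ∑ i ∈ Finset.range P.n \ T, (s i - hval g (P.x i) (P.x (i + 1))) := by
      rw [← hsum_eq, hsplit]; ring
    rw [heq]
    calc |(∑ i ∈ Finset.range P.n, s i - A)
          - ∑ i ∈ Finset.range P.n \ T, (s i - hval g (P.x i) (P.x (i + 1)))|
        ≤ |∑ i ∈ Finset.range P.n, s i - A|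
          + |∑ i ∈ Finset.range P.n \ T, (s i - hval g (P.x i) (P.x (i + 1)))| :=
          abs_sub _ _
      _ < η + ε := by
          rcases lt_or_ge (|∑ i ∈ Finset.range P.n \ T,
            (s i - hval g (P.x i) (P.x (i + 1)))|) ε with h | h
          · linarith
          · linarith [hcomp.antisymm h]
  by_contra hcon
  push_neg at hcon
  linarith [key ((|∑ i ∈ T, (g (P.t i) * (P.x (i + 1) - P.x i)
    - hval g (P.x i) (P.x (i + 1)))| - η) / 2) (by linarith)]

lemma geom_tail_le {c : ℝ} (hc : 0 ≤ c) (K : ℕ) :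
    ∑ k ∈ Finset.range K, c / 2 ^ (k + 1) ≤ c := by
  have key : ∑ k ∈ Finset.range K, (1:ℝ) / 2 ^ (k + 1) = 1 - 1 / 2 ^ K := by
    induction K with
    | zero => simp
    | succ K ih =>
      rw [Finset.sum_range_succ, ih]
      have h2 : (2:ℝ) ^ (K + 1) = 2 * 2 ^ K := by ring
      have hK : (0:ℝ) < 2 ^ K := by positivity
      field_simp
      ring
  have h1 : ∑ k ∈ Finset.range K, c / 2 ^ (k + 1)
      = c * ∑ k ∈ Finset.range K, (1:ℝ) / 2 ^ (k + 1) := by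
    rw [Finset.mul_sum]
    exact Finset.sum_congr rfl fun k _ => by ring
  rw [h1, key]
  have hK : (0:ℝ) < 1 / 2 ^ K := by positivity
  nlinarith

/-- Monotone convergence theorem for the Henstock integral. -/
theorem henstock_monotone_convergence (a b : ℝ) (hab : a < b)
    (f : ℝ → ℝ) (fk : ℕ → ℝ → ℝ) (A : ℕ → ℝ) (L : ℝ)
    (hint : ∀ k, HenstockIntegralTo (fk k) a b (A k))
    (hmono : ∀ k, ∀ x ∈ Set.Icc a b, fk k x ≤ fk (k + 1) x)
    (hptwise : ∀ x ∈ Set.Icc a b,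
      Filter.Tendsto (fun k => fk k x) Filter.atTop (nhds (f x)))
    (hlim : Filter.Tendsto A Filter.atTop (nhds L)) :
    HenstockIntegralTo f a b L := by
  classical
  have hmono' : ∀ j k : ℕ, j ≤ k → ∀ x ∈ Set.Icc a b, fk j x ≤ fk k x := by
    intro j k hjk x hx
    induction k, hjk using Nat.le_induction with
    | base => exact le_rfl
    | succ k hk ih => exact le_trans ih (hmono k x hx)
  have hfk_le_f : ∀ x ∈ Set.Icc a b, ∀ k, fk k x ≤ f x := by
    intro x hx k
    exact ge_of_tendsto (hptwise x hx)
      (Filter.eventually_atTop.2 ⟨k, fun m hm => hmono' k m hm x hx⟩)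
  have hA_mono : Monotone A :=
    monotone_nat_of_le_succ fun k =>
      henstock_le hab (fun x hx => hmono k x hx) (hint k) (hint (k + 1))
  have hA_le_L : ∀ k, A k ≤ L := fun k => Monotone.ge_of_tendsto hA_mono hlim k
  intro ε hε
  have hε'0 : 0 < ε / 4 := by linarith
  have hba : 0 < b - a := by linarith
  obtain ⟨N, hN⟩ : ∃ N, L - ε / 4 < A N := by
    rcases (Metric.tendsto_atTop.1 hlim) (ε / 4) hε'0 with ⟨N, hN⟩
    have h1 := hN N le_rfl
    rw [Real.dist_eq] at h1
    have h2 := abs_lt.1 h1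
    exact ⟨N, by linarith [h2.1]⟩
  have hm0 : ∀ x : ℝ, ∃ k : ℕ, x ∈ Set.Icc a b →
      (N ≤ k ∧ f x - fk k x < ε / 4 / (b - a)) := by
    intro x
    by_cases hx : x ∈ Set.Icc a b
    · have hpos : 0 < ε / 4 / (b - a) := by positivity
      rcases (Metric.tendsto_atTop.1 (hptwise x hx)) (ε / 4 / (b - a)) hpos with ⟨M, hM⟩
      refine ⟨max N M, fun _ => ⟨le_max_left _ _, ?_⟩⟩
      have h1 := hM (max N M) (le_max_right _ _)
      rw [Real.dist_eq] at h1
      have h2 := abs_lt.1 h1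
      linarith [h2.1]
    · exact ⟨0, fun h => absurd h hx⟩
  choose m hm using hm0
  have hδk0 : ∀ k : ℕ, ∃ δ : ℝ → ℝ, IsGauge a b δ ∧
      Approx (fk k) a b δ (A k) (ε / 4 / 2 ^ (k + 1)) :=
    fun k => hint k _ (by positivity)
  choose δk hδkG hδkA using hδk0
  refine ⟨fun x => if x ∈ Set.Icc a b then δk (m x) x else 1, ?_, ?_⟩
  · intro x hx
    dsimp only
    rw [if_pos hx]
    exact hδkG (m x) x hx
  intro P hP
  have htmem : ∀ i, i < P.n → P.t i ∈ Set.Icc a b := fun i hi => P.t_mem hi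
  have hfine : ∀ i, i < P.n → P.x (i + 1) - P.x i < δk (m (P.t i)) (P.t i) := by
    intro i hi
    have h1 := hP i hi
    dsimp only at h1
    rwa [if_pos (htmem i hi)] at h1
  have hxnn : ∀ i, i < P.n → 0 ≤ P.x (i + 1) - P.x i :=
    fun i hi => by have := P.x_mono i hi; linarith
  set F : ℕ → ℕ → ℝ := fun k i => hval (fk k) (P.x i) (P.x (i + 1)) with hF
  have hFspec : ∀ k i, i < P.n → HenstockIntegralTo (fk k) (P.x i) (P.x (i + 1)) (F k i) :=
    fun k i hi => hval_spec
      (henstock_sub (hint k) (P.x_mem hi.le).1 (P.x_mono i hi) (P.x_mem hi).2)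
  have hFsum : ∀ k, ∑ i ∈ Finset.range P.n, F k i = A k := fun k => hval_sum (hint k) P
  set S1 := ∑ i ∈ Finset.range P.n,
    (f (P.t i) - fk (m (P.t i)) (P.t i)) * (P.x (i + 1) - P.x i) with hS1
  set S2 := ∑ i ∈ Finset.range P.n,
    (fk (m (P.t i)) (P.t i) * (P.x (i + 1) - P.x i) - F (m (P.t i)) i) with hS2
  set S3 := ∑ i ∈ Finset.range P.n, F (m (P.t i)) i with hS3
  have hcomb : S1 + S2 + S3 = riemannSum f P := by
    rw [hS1, hS2, hS3, riemannSum, ← Finset.sum_add_distrib, ← Finset.sum_add_distrib]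
    exact Finset.sum_congr rfl fun i _ => by ring
  -- Bound on S1
  have hb1a : 0 ≤ S1 := by
    apply Finset.sum_nonneg
    intro i hi
    rw [Finset.mem_range] at hi
    have h1 := hfk_le_f (P.t i) (htmem i hi) (m (P.t i))
    exact mul_nonneg (by linarith) (hxnn i hi)
  have hb1b : S1 ≤ ε / 4 := by
    calc S1 ≤ ∑ i ∈ Finset.range P.n, (ε / 4 / (b - a)) * (P.x (i + 1) - P.x i) := by
          apply Finset.sum_le_sum
          intro i hi
          rw [Finset.mem_range] at hi
          exact mul_le_mul_of_nonneg_right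
            ((hm (P.t i) (htmem i hi)).2).le (hxnn i hi)
      _ = (ε / 4 / (b - a)) * (b - a) := by
          rw [← Finset.mul_sum, P.sum_lengths]
      _ = ε / 4 := div_mul_cancel₀ _ hba.ne'
  -- Bound on S2
  set M := (Finset.range P.n).sup (fun i => m (P.t i)) with hMdef
  have hmaps : ∀ i ∈ Finset.range P.n, m (P.t i) ∈ Finset.range (M + 1) :=
    fun i hi => Finset.mem_range.2 (Nat.lt_succ_of_le (Finset.le_sup (f := fun i => m (P.t i)) hi))
  have hfib := Finset.sum_fiberwise_of_maps_to hmaps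
    (fun i => fk (m (P.t i)) (P.t i) * (P.x (i + 1) - P.x i) - F (m (P.t i)) i)
  have hinner : ∀ k ∈ Finset.range (M + 1),
      |∑ i ∈ (Finset.range P.n).filter (fun i => m (P.t i) = k),
        (fk (m (P.t i)) (P.t i) * (P.x (i + 1) - P.x i) - F (m (P.t i)) i)|
        ≤ ε / 4 / 2 ^ (k + 1) := by
    intro k _
    set T := (Finset.range P.n).filter (fun i => m (P.t i) = k) with hT
    have hmem : ∀ i ∈ T, i ∈ Finset.range P.n ∧ m (P.t i) = k := by
      intro i hi
      rw [hT, Finset.mem_filter] at hi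
      exact hi
    have hcongr : ∑ i ∈ T,
        (fk (m (P.t i)) (P.t i) * (P.x (i + 1) - P.x i) - F (m (P.t i)) i)
        = ∑ i ∈ T, (fk k (P.t i) * (P.x (i + 1) - P.x i)
            - hval (fk k) (P.x i) (P.x (i + 1))) := by
      apply Finset.sum_congr rfl
      intro i hi
      rw [(hmem i hi).2, hF]
    rw [hcongr]
    apply saks_henstock (hint k) P (hδkG k) (hδkA k) T (Finset.filter_subset _ _)
    intro i hi
    have h1 := hfine i (Finset.mem_range.1 (hmem i hi).1)
    rwa [(hmem i hi).2] at h1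
  have hb2 : |S2| ≤ ε / 4 := by
    rw [hS2, ← hfib]
    calc |∑ k ∈ Finset.range (M + 1), ∑ i ∈ (Finset.range P.n).filter
          (fun i => m (P.t i) = k),
          (fk (m (P.t i)) (P.t i) * (P.x (i + 1) - P.x i) - F (m (P.t i)) i)|
        ≤ ∑ k ∈ Finset.range (M + 1), |∑ i ∈ (Finset.range P.n).filter
          (fun i => m (P.t i) = k),
          (fk (m (P.t i)) (P.t i) * (P.x (i + 1) - P.x i) - F (m (P.t i)) i)| :=
          Finset.abs_sum_le_sum_abs _ _
      _ ≤ ∑ k ∈ Finset.range (M + 1), ε / 4 / 2 ^ (k + 1) :=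
          Finset.sum_le_sum hinner
      _ ≤ ε / 4 := geom_tail_le (by linarith) _
  -- Bound on S3
  have hFle : ∀ j k : ℕ, j ≤ k → ∀ i, i < P.n → F j i ≤ F k i := by
    intro j k hjk i hi
    apply henstock_le (P.x_mono i hi) _ (hFspec j i hi) (hFspec k i hi)
    intro y hy
    have hy' : y ∈ Set.Icc a b :=
      ⟨le_trans (P.x_mem hi.le).1 hy.1, le_trans hy.2 (P.x_mem hi).2⟩
    exact hmono' j k hjk y hy'
  have hb3a : A N ≤ S3 := by
    rw [← hFsum N, hS3]
    apply Finset.sum_le_sum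
    intro i hi
    rw [Finset.mem_range] at hi
    exact hFle N (m (P.t i)) (hm (P.t i) (htmem i hi)).1 i hi
  have hb3b : S3 ≤ A M := by
    rw [← hFsum M, hS3]
    apply Finset.sum_le_sum
    intro i hi
    exact hFle (m (P.t i)) M (Finset.le_sup (f := fun i => m (P.t i)) hi) i (Finset.mem_range.1 hi)
  have hb3 : |S3 - L| < ε / 4 := by
    rw [abs_lt]
    constructor
    · linarith
    · linarith [hA_le_L M]
  -- Conclusion
  have h1 : |S1| ≤ ε / 4 := by rw [abs_of_nonneg hb1a]; exact hb1b
  have hfin : riemannSum f P - L = S1 + S2 + (S3 - L) := by rw [← hcomb]; ring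
  rw [hfin]
  calc |S1 + S2 + (S3 - L)| ≤ |S1 + S2| + |S3 - L| := abs_add_le _ _
    _ ≤ |S1| + |S2| + |S3 - L| := by linarith [abs_add_le S1 S2]
    _ < ε := by linarith
end
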